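/- Let R_1, ..., R_K be positive reals and a_1, ..., a_K nonnegative reals with A_n = a_{n+1} + ... + a_K. If A_n > 2^{-(R_1+...+R_n)} for all n = 1, ..., K-1, and additionally a_1 - (2^{R_1}-1)A_1 > 0, then a_1 + A_1 > 1, contradicting the power constraint a_1 + ... + a_K ≤ 1. -/

import Mathlib

theorem one_lt_add_of_inv_lt_of_sub_one_mul_lt {c a A : ℝ} (hc : 0 < c) (hA : c⁻¹ < A)
    (ha : (c - 1) * A < a) : 1 < a + A := by
  have hcA : 1 < c * A := (inv_lt_iff_one_lt_mul₀' hc).mp hA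
  linarith

theorem stmt_2 (K : ℕ) (hK : 2 ≤ K) (R a : ℕ → ℝ)
    (hA : ∀ n ∈ Finset.Icc 1 (K - 1), (∑ l ∈ Finset.Icc (n + 1) K, a l) >
      (2 : ℝ) ^ (-(∑ l ∈ Finset.Icc 1 n, R l)))
    (hpos : a 1 - ((2 : ℝ) ^ (R 1) - 1) * (∑ l ∈ Finset.Icc 2 K, a l) > 0) :
    a 1 + (∑ l ∈ Finset.Icc 2 K, a l) > 1 := by
  have hA1 := hA 1 (Finset.mem_Icc.mpr ⟨le_rfl, by omega⟩)
  rw [Finset.Icc_self, Finset.sum_singleton, Real.rpow_neg zero_le_two] at hA1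
  exact one_lt_add_of_inv_lt_of_sub_one_mul_lt (by positivity) hA1 (by linarith)
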